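/- arXiv:1111.0712 — 3 statements merged into one kernel-verified Lean document; each statement's English description precedes it below -/
import Mathlib

section
/- Let H be a real inner product space, let R > 0, and let w* ∈ H. For each t ∈ {1,...,T} let a_t, b_t, c_t ∈ H (the feature vectors φ(x_t, ȳ_t), φ(x_t, y_t), φ(x_t, y_t*) of the feedback object, the presented object, and the optimal object) satisfy ‖a_t‖ ≤ R, ‖b_t‖ ≤ R, ‖c_t‖ ≤ R. Define the Preference Perceptron iterates by w_1 = 0 and w_{t+1} = w_t + a_t − b_t, and assume the argmax prediction property ⟨w_t, a_t − b_t⟩ ≤ 0 for every t (since the presented object maximizes ⟨w_t, φ(x_t, ·)⟩). Suppose the feedback is α-informative: there exist α ∈ (0,1] and reals ξ_t ≥ 0 with ⟨w*, a_t⟩ − ⟨w*, b_t⟩ = α(⟨w*, c_t⟩ − ⟨w*, b_t⟩) − ξ_t for all t. Then the average utility regret satisfies (1/T) · Σ_{t=1}^T (⟨w*, c_t⟩ − ⟨w*, b_t⟩) ≤ (1/(αT)) · Σ_{t=1}^T ξ_t + 2R‖w*‖/(α√T). -/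
/-!
The iterate `w_{T+1}` is the sum of all feedback steps `a_t - b_t`, so by `α`-informativity its
inner product with `w*` equals `α · (cumulative regret) - Σ ξ_t`. Since each step has length at
most `2R` and makes an obtuse angle with the current iterate, `‖w_{t+1}‖² ≤ ‖w_t‖² + 4R²`, hence
`‖w_{T+1}‖ ≤ 2R√T`, and Cauchy–Schwarz bounds that inner product by `2R‖w*‖√T`.
-/

open scoped RealInnerProductSpace
open Finset

theorem eq_add_sum_of_succ_eq_add {M : Type*} [AddCommMonoid M] {w d : ℕ → M} {n : ℕ}
    (hstep : ∀ t ∈ Icc 1 n, w (t + 1) = w t + d t) :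
    w (n + 1) = w 1 + ∑ t ∈ Icc 1 n, d t := by
  induction n with
  | zero => simp
  | succ k ih =>
    rw [hstep _ (right_mem_Icc.mpr (by omega)), sum_Icc_succ_top (by omega),
      ih fun t ht => hstep t (Icc_subset_Icc_right k.le_succ ht), add_assoc]

section InnerProductSpace

variable {H : Type*} [NormedAddCommGroup H] [InnerProductSpace ℝ H] {w d : ℕ → H} {n : ℕ}

theorem norm_sq_le_add_sum_of_inner_nonpos
    (hstep : ∀ t ∈ Icc 1 n, w (t + 1) = w t + d t) (hinner : ∀ t ∈ Icc 1 n, ⟪w t, d t⟫ ≤ 0) :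
    ‖w (n + 1)‖ ^ 2 ≤ ‖w 1‖ ^ 2 + ∑ t ∈ Icc 1 n, ‖d t‖ ^ 2 := by
  induction n with
  | zero => simp
  | succ k ih =>
    have hk : k + 1 ∈ Icc 1 (k + 1) := right_mem_Icc.mpr (by omega)
    have ih' := ih (fun t ht => hstep t (Icc_subset_Icc_right k.le_succ ht))
      (fun t ht => hinner t (Icc_subset_Icc_right k.le_succ ht))
    rw [hstep _ hk, norm_add_sq_real, sum_Icc_succ_top (by omega)]
    linarith [hinner _ hk]

theorem norm_le_mul_sqrt_of_inner_nonpos {D : ℝ} (hD : 0 ≤ D) (hw1 : w 1 = 0)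
    (hstep : ∀ t ∈ Icc 1 n, w (t + 1) = w t + d t) (hinner : ∀ t ∈ Icc 1 n, ⟪w t, d t⟫ ≤ 0)
    (hd : ∀ t ∈ Icc 1 n, ‖d t‖ ≤ D) :
    ‖w (n + 1)‖ ≤ D * Real.sqrt n := by
  have hsq : ‖w (n + 1)‖ ^ 2 ≤ (D * Real.sqrt n) ^ 2 :=
    calc ‖w (n + 1)‖ ^ 2 ≤ ∑ t ∈ Icc 1 n, ‖d t‖ ^ 2 := by
          simpa [hw1] using norm_sq_le_add_sum_of_inner_nonpos hstep hinner
      _ ≤ ∑ _t ∈ Icc 1 n, D ^ 2 :=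
          sum_le_sum fun t ht => pow_le_pow_left₀ (norm_nonneg _) (hd t ht) 2
      _ = (D * Real.sqrt n) ^ 2 := by
          rw [sum_const, Nat.card_Icc, mul_pow, Real.sq_sqrt n.cast_nonneg, nsmul_eq_mul]
          push_cast
          ring
  exact (pow_le_pow_iff_left₀ (norm_nonneg _) (by positivity) two_ne_zero).mp hsq

end InnerProductSpace

theorem one_div_mul_le_of_mul_sub_le_mul_sqrt {α T S X C : ℝ} (hα : 0 < α) (hT : 0 ≤ T)
    (h : α * S - X ≤ C * Real.sqrt T) :
    1 / T * S ≤ 1 / (α * T) * X + C / (α * Real.sqrt T) :=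
  calc 1 / T * S = 1 / (α * T) * (α * S) := by
        rw [one_div_mul_eq_div, one_div_mul_eq_div, mul_div_mul_left _ _ hα.ne']
    _ ≤ 1 / (α * T) * (X + C * Real.sqrt T) := by gcongr; linarith
    _ = 1 / (α * T) * X + C / α * (Real.sqrt T / T) := by ring
    _ = 1 / (α * T) * X + C / (α * Real.sqrt T) := by rw [Real.sqrt_div_self']; ring

theorem preference_perceptron_regret_general
    {H : Type*} [NormedAddCommGroup H] [InnerProductSpace ℝ H]
    (R : ℝ) (hR : 0 < R) (wstar : H) (T : ℕ)
    (a b c : ℕ → H) (w : ℕ → H)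
    (ha : ∀ t ∈ Finset.Icc 1 T, ‖a t‖ ≤ R)
    (hb : ∀ t ∈ Finset.Icc 1 T, ‖b t‖ ≤ R)
    (hw1 : w 1 = 0)
    (hwrec : ∀ t ∈ Finset.Icc 1 T, w (t + 1) = w t + a t - b t)
    (hargmax : ∀ t ∈ Finset.Icc 1 T, ⟪w t, a t - b t⟫ ≤ 0)
    (α : ℝ) (hα : α ∈ Set.Ioc (0 : ℝ) 1)
    (ξ : ℕ → ℝ)
    (hfeed : ∀ t ∈ Finset.Icc 1 T,
      ⟪wstar, a t⟫ - ⟪wstar, b t⟫ = α * (⟪wstar, c t⟫ - ⟪wstar, b t⟫) - ξ t) :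
    (1 / (T : ℝ)) * ∑ t ∈ Finset.Icc 1 T, (⟪wstar, c t⟫ - ⟪wstar, b t⟫)
      ≤ (1 / (α * T)) * ∑ t ∈ Finset.Icc 1 T, ξ t
        + 2 * R * ‖wstar‖ / (α * Real.sqrt T) := by
  have hstep : ∀ t ∈ Icc 1 T, w (t + 1) = w t + (a t - b t) := fun t ht => by
    rw [hwrec t ht, add_sub_assoc]
  have hsum : w (T + 1) = ∑ t ∈ Icc 1 T, (a t - b t) := by
    simpa [hw1] using eq_add_sum_of_succ_eq_add hstep
  have hnorm : ‖w (T + 1)‖ ≤ 2 * R * Real.sqrt T :=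
    norm_le_mul_sqrt_of_inner_nonpos (by positivity) hw1 hstep hargmax fun t ht =>
      (norm_sub_le _ _).trans (by linarith [ha t ht, hb t ht])
  have hprogress : α * ∑ t ∈ Icc 1 T, (⟪wstar, c t⟫ - ⟪wstar, b t⟫) - ∑ t ∈ Icc 1 T, ξ t
      = ⟪wstar, w (T + 1)⟫ := by
    rw [hsum, inner_sum, mul_sum, ← sum_sub_distrib]
    exact sum_congr rfl fun t ht => by rw [inner_sub_right, hfeed t ht]
  refine one_div_mul_le_of_mul_sub_le_mul_sqrt hα.1 T.cast_nonneg ?_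
  calc _ = ⟪wstar, w (T + 1)⟫ := hprogress
    _ ≤ ‖wstar‖ * ‖w (T + 1)‖ := real_inner_le_norm _ _
    _ ≤ ‖wstar‖ * (2 * R * Real.sqrt T) := by gcongr
    _ = 2 * R * ‖wstar‖ * Real.sqrt T := by ring

/-- Theorem 1 (Preference Perceptron regret bound): under `α`-informative feedback,
the average utility regret is at most `(1/(αT)) Σ ξ_t + 2R‖w*‖/(α√T)`. -/
theorem preference_perceptron_regret
    {H : Type*} [NormedAddCommGroup H] [InnerProductSpace ℝ H]
    (R : ℝ) (hR : 0 < R) (wstar : H) (T : ℕ) (hT : 0 < T)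
    (a b c : ℕ → H) (w : ℕ → H)
    (ha : ∀ t ∈ Finset.Icc 1 T, ‖a t‖ ≤ R)
    (hb : ∀ t ∈ Finset.Icc 1 T, ‖b t‖ ≤ R)
    (hc : ∀ t ∈ Finset.Icc 1 T, ‖c t‖ ≤ R)
    (hw1 : w 1 = 0)
    (hwrec : ∀ t ∈ Finset.Icc 1 T, w (t + 1) = w t + a t - b t)
    (hargmax : ∀ t ∈ Finset.Icc 1 T, ⟪w t, a t - b t⟫ ≤ 0)
    (α : ℝ) (hα : α ∈ Set.Ioc (0 : ℝ) 1)
    (ξ : ℕ → ℝ) (hξ : ∀ t ∈ Finset.Icc 1 T, 0 ≤ ξ t)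
    (hfeed : ∀ t ∈ Finset.Icc 1 T,
      ⟪wstar, a t⟫ - ⟪wstar, b t⟫ = α * (⟪wstar, c t⟫ - ⟪wstar, b t⟫) - ξ t) :
    (1 / (T : ℝ)) * ∑ t ∈ Finset.Icc 1 T, (⟪wstar, c t⟫ - ⟪wstar, b t⟫)
      ≤ (1 / (α * T)) * ∑ t ∈ Finset.Icc 1 T, ξ t
        + 2 * R * ‖wstar‖ / (α * Real.sqrt T) :=
  preference_perceptron_regret_general R hR wstar T a b c w ha hb hw1 hwrec hargmax α hα ξ hfeed
end

section
/- Let H be a real inner product space, let R > 0, and let w* ∈ H. For each t ∈ {1,...,T} let a_t, b_t, c_t ∈ H satisfy ‖a_t‖ ≤ R, ‖b_t‖ ≤ R, ‖c_t‖ ≤ R. Define w_1 = 0 and w_{t+1} = w_t + a_t − b_t, and assume ⟨w_t, a_t − b_t⟩ ≤ 0 for every t. Suppose the feedback is noise-free α-informative for some α ∈ (0,1]: ⟨w*, a_t⟩ − ⟨w*, b_t⟩ = α(⟨w*, c_t⟩ − ⟨w*, b_t⟩) for all t. Then (1/T) · Σ_{t=1}^T (⟨w*, c_t⟩ − ⟨w*,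 b_t⟩) ≤ 2R‖w*‖/(α√T); in particular, the average regret converges to zero at rate 1/√T. -/
open scoped RealInnerProductSpace

/-- Noise-free special case of Theorem 1: with noise-free `α`-informative feedback,
the average regret is at most `2R‖w*‖/(α√T)`, hence converges to zero at rate `1/√T`. -/
theorem preference_perceptron_regret_noise_free
    {H : Type*} [NormedAddCommGroup H] [InnerProductSpace ℝ H]
    (R : ℝ) (hR : 0 < R) (wstar : H) (T : ℕ) (hT : 0 < T)
    (a b c : ℕ → H) (w : ℕ → H)
    (ha : ∀ t ∈ Finset.Icc 1 T, ‖a t‖ ≤ R)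
    (hb : ∀ t ∈ Finset.Icc 1 T, ‖b t‖ ≤ R)
    (hc : ∀ t ∈ Finset.Icc 1 T, ‖c t‖ ≤ R)
    (hw1 : w 1 = 0)
    (hwrec : ∀ t ∈ Finset.Icc 1 T, w (t + 1) = w t + a t - b t)
    (hargmax : ∀ t ∈ Finset.Icc 1 T, ⟪w t, a t - b t⟫ ≤ 0)
    (α : ℝ) (hα : α ∈ Set.Ioc (0 : ℝ) 1)
    (hfeed : ∀ t ∈ Finset.Icc 1 T,
      ⟪wstar, a t⟫ - ⟪wstar, b t⟫ = α * (⟪wstar, c t⟫ - ⟪wstar, b t⟫)) :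
    (1 / (T : ℝ)) * ∑ t ∈ Finset.Icc 1 T, (⟪wstar, c t⟫ - ⟪wstar, b t⟫)
      ≤ 2 * R * ‖wstar‖ / (α * Real.sqrt T) := by
  obtain ⟨hα0, hα1⟩ := hα
  -- key invariant
  have key : ∀ n, n ≤ T → ‖w (n + 1)‖ ^ 2 ≤ 4 * R ^ 2 * n ∧
      ⟪wstar, w (n + 1)⟫ = ∑ t ∈ Finset.Icc 1 n, (⟪wstar, a t⟫ - ⟪wstar, b t⟫) := by
    intro n
    induction n with
    | zero => intro _; simp [hw1]
    | succ m ih =>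
      intro hm
      have hmem : m + 1 ∈ Finset.Icc 1 T := by
        simp [Nat.succ_le_iff]; omega
      obtain ⟨ih1, ih2⟩ := ih (Nat.le_of_succ_le hm)
      have hrec := hwrec (m + 1) hmem
      constructor
      · have hexp : ‖w (m + 1 + 1)‖ ^ 2
            = ‖w (m + 1)‖ ^ 2 + 2 * ⟪w (m + 1), a (m + 1) - b (m + 1)⟫
              + ‖a (m + 1) - b (m + 1)‖ ^ 2 := by
          rw [hrec, add_sub_assoc, @norm_add_sq_real]
        have hab : ‖a (m + 1) - b (m + 1)‖ ≤ 2 * R := by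
          calc ‖a (m + 1) - b (m + 1)‖ ≤ ‖a (m + 1)‖ + ‖b (m + 1)‖ := norm_sub_le _ _
            _ ≤ R + R := add_le_add (ha _ hmem) (hb _ hmem)
            _ = 2 * R := by ring
        have hab2 : ‖a (m + 1) - b (m + 1)‖ ^ 2 ≤ 4 * R ^ 2 := by
          have := pow_le_pow_left₀ (norm_nonneg _) hab 2
          nlinarith
        have harg := hargmax (m + 1) hmem
        rw [hexp]
        push_cast
        nlinarith
      · rw [hrec, add_sub_assoc, inner_add_right, ih2,
          Finset.sum_Icc_succ_top (by omega : 1 ≤ m + 1)]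
        rw [inner_sub_right]
  obtain ⟨hnorm, hinner⟩ := key T le_rfl
  have hsum : ∑ t ∈ Finset.Icc 1 T, (⟪wstar, a t⟫ - ⟪wstar, b t⟫)
      = α * ∑ t ∈ Finset.Icc 1 T, (⟪wstar, c t⟫ - ⟪wstar, b t⟫) := by
    rw [Finset.mul_sum]
    exact Finset.sum_congr rfl hfeed
  set S := ∑ t ∈ Finset.Icc 1 T, (⟪wstar, c t⟫ - ⟪wstar, b t⟫) with hS
  have hTpos : (0 : ℝ) < T := by exact_mod_cast hT
  have hsqrtpos : 0 < Real.sqrt T := Real.sqrt_pos.mpr hTpos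
  have hwnorm : ‖w (T + 1)‖ ≤ 2 * R * Real.sqrt T := by
    have h1 : ‖w (T + 1)‖ ^ 2 ≤ (2 * R * Real.sqrt T) ^ 2 := by
      have : Real.sqrt T ^ 2 = (T : ℝ) := Real.sq_sqrt hTpos.le
      nlinarith
    have h2 : 0 ≤ 2 * R * Real.sqrt T := by positivity
    calc ‖w (T + 1)‖ = Real.sqrt (‖w (T + 1)‖ ^ 2) := (Real.sqrt_sq (norm_nonneg _)).symm
      _ ≤ Real.sqrt ((2 * R * Real.sqrt T) ^ 2) := Real.sqrt_le_sqrt h1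
      _ = 2 * R * Real.sqrt T := Real.sqrt_sq h2
  have hcs : α * S ≤ ‖wstar‖ * ‖w (T + 1)‖ := by
    rw [← hsum, ← hinner]
    exact real_inner_le_norm _ _
  have hαS : α * S ≤ ‖wstar‖ * (2 * R * Real.sqrt T) := by
    calc α * S ≤ ‖wstar‖ * ‖w (T + 1)‖ := hcs
      _ ≤ ‖wstar‖ * (2 * R * Real.sqrt T) :=
        mul_le_mul_of_nonneg_left hwnorm (norm_nonneg _)
  have hsq : Real.sqrt T * Real.sqrt T = (T : ℝ) := Real.mul_self_sqrt hTpos.le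
  have heq : 1 / (T : ℝ) * S = S / T := by ring
  rw [heq, div_le_div_iff₀ hTpos (by positivity)]
  have h3 : α * S * Real.sqrt T ≤ ‖wstar‖ * (2 * R * Real.sqrt T) * Real.sqrt T :=
    mul_le_mul_of_nonneg_right hαS hsqrtpos.le
  have h4 : ‖wstar‖ * (2 * R * Real.sqrt T) * Real.sqrt T = 2 * R * ‖wstar‖ * T := by
    rw [mul_assoc, mul_assoc, mul_comm (Real.sqrt (T:ℝ)), mul_assoc, hsq]; ring
  linarith [h3, h4]
end

section
/- Let H be a real inner product space, R > 0, and w* ∈ H. For each t ∈ {1,...,T} let a_t, b_t ∈ H satisfy ‖a_t‖ ≤ R and ‖b_t‖ ≤ R. Define w_1 = 0 and w_{t+1} = w_t + a_t − b_t, and assume ⟨w_t, a_t − b_t⟩ ≤ 0 for every t ∈ {1,...,T}. Then the cumulative utility gain of the feedback over the predictions satisfies Σ_{t=1}^T (⟨w*, a_t⟩ − ⟨w*, b_t⟩) ≤ 2R√T · ‖w*‖. -/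
open scoped RealInnerProductSpace

/-- Cumulative utility gain bound for the Preference Perceptron:
`Σ_{t=1}^T (⟪w*, a_t⟫ - ⟪w*, b_t⟫) ≤ 2R√T ‖w*‖`. -/
theorem preference_perceptron_cumulative_gain_bound
    {H : Type*} [NormedAddCommGroup H] [InnerProductSpace ℝ H]
    (R : ℝ) (hR : 0 < R) (wstar : H) (T : ℕ)
    (a b : ℕ → H) (w : ℕ → H)
    (ha : ∀ t ∈ Finset.Icc 1 T, ‖a t‖ ≤ R)
    (hb : ∀ t ∈ Finset.Icc 1 T, ‖b t‖ ≤ R)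
    (hw1 : w 1 = 0)
    (hwrec : ∀ t ∈ Finset.Icc 1 T, w (t + 1) = w t + a t - b t)
    (hargmax : ∀ t ∈ Finset.Icc 1 T, ⟪w t, a t - b t⟫ ≤ 0) :
    ∑ t ∈ Finset.Icc 1 T, (⟪wstar, a t⟫ - ⟪wstar, b t⟫)
      ≤ 2 * R * Real.sqrt T * ‖wstar‖ := by
  -- norm bound by induction
  have hnorm : ∀ n, n ≤ T → ‖w (n + 1)‖ ^ 2 ≤ 4 * R ^ 2 * n := by
    intro n
    induction n with
    | zero => intro _; simp [hw1]
    | succ k ih =>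
      intro hk
      have hk' : k ≤ T := Nat.le_of_succ_le hk
      have hmem : k + 1 ∈ Finset.Icc 1 T := Finset.mem_Icc.mpr ⟨Nat.succ_le_succ (Nat.zero_le k), hk⟩
      have hrec := hwrec (k + 1) hmem
      have hinner := hargmax (k + 1) hmem
      have hab : ‖a (k + 1) - b (k + 1)‖ ≤ 2 * R := by
        calc ‖a (k + 1) - b (k + 1)‖ ≤ ‖a (k + 1)‖ + ‖b (k + 1)‖ := norm_sub_le _ _
        _ ≤ R + R := add_le_add (ha _ hmem) (hb _ hmem)
        _ = 2 * R := by ring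
      have habsq : ‖a (k + 1) - b (k + 1)‖ ^ 2 ≤ 4 * R ^ 2 := by
        have := sq_le_sq' (by linarith [norm_nonneg (a (k+1) - b (k+1))]) hab
        nlinarith
      have hexp : ‖w (k + 1 + 1)‖ ^ 2 =
          ‖w (k + 1)‖ ^ 2 + 2 * ⟪w (k + 1), a (k + 1) - b (k + 1)⟫ +
            ‖a (k + 1) - b (k + 1)‖ ^ 2 := by
        rw [hrec, add_sub_assoc]
        rw [@norm_add_sq_real]
      have := ih hk'
      rw [hexp]
      push_cast
      nlinarith
  -- telescoping
  have htel : ∀ n, n ≤ T → ⟪wstar, w (n + 1)⟫ = ∑ t ∈ Finset.Icc 1 n, ⟪wstar, a t - b t⟫ := by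
    intro n
    induction n with
    | zero => intro _; simp [hw1]
    | succ k ih =>
      intro hk
      have hk' : k ≤ T := Nat.le_of_succ_le hk
      have hmem : k + 1 ∈ Finset.Icc 1 T := Finset.mem_Icc.mpr ⟨Nat.succ_le_succ (Nat.zero_le k), hk⟩
      rw [Finset.sum_Icc_succ_top (Nat.succ_le_succ (Nat.zero_le k)), ← ih hk',
        hwrec (k + 1) hmem, add_sub_assoc, inner_add_right]
  have hsum : ∑ t ∈ Finset.Icc 1 T, (⟪wstar, a t⟫ - ⟪wstar, b t⟫) = ⟪wstar, w (T + 1)⟫ := by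
    rw [htel T le_rfl]
    exact Finset.sum_congr rfl fun t _ => by rw [inner_sub_right]
  rw [hsum]
  have hwn : ‖w (T + 1)‖ ≤ 2 * R * Real.sqrt T := by
    have h1 := hnorm T le_rfl
    have h2 : (2 * R * Real.sqrt T) ^ 2 = 4 * R ^ 2 * T := by
      rw [mul_pow, mul_pow, Real.sq_sqrt (Nat.cast_nonneg T)]; ring
    have h3 : 0 ≤ 2 * R * Real.sqrt T := by positivity
    nlinarith [norm_nonneg (w (T + 1))]
  calc ⟪wstar, w (T + 1)⟫ ≤ ‖wstar‖ * ‖w (T + 1)‖ := real_inner_le_norm _ _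
    _ ≤ ‖wstar‖ * (2 * R * Real.sqrt T) := by
        exact mul_le_mul_of_nonneg_left hwn (norm_nonneg _)
    _ = 2 * R * Real.sqrt T * ‖wstar‖ := by ring
end
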